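/- arXiv:2207.07792 — 3 statements merged into one kernel-verified Lean document; each statement's English description precedes it below -/
import Mathlib

section
/- Let q be a prime power and let α_1,…,α_n be distinct elements of F_{q^2} with u_i = ∏_{j≠i}(α_i - α_j)^{-1}. If v_1,…,v_n ∈ F_{q^2}^* satisfy v_i^{q+1} = u_i for all i and k(q+1) ≤ n + q - 1, then the generalized Reed-Solomon code GRS_k(α, v) = {(v_1 f(α_1),…,v_n f(α_n)) : f ∈ F_{q^2}[x], deg f < k} is Hermitian self-orthogonal, i.e., contained in its Hermitian dual. -/
open Finset Polynomial

lemma coeff_lagrange_basis {F : Type*} [Field F] {ι : Type*} [DecidableEq ι]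
    {s : Finset ι} {v : ι → F} {i : ι} (hvs : Set.InjOn v s) (hi : i ∈ s) :
    (Lagrange.basis s v i).coeff (s.card - 1) = ∏ j ∈ s.erase i, (v i - v j)⁻¹ := by
  rw [← Lagrange.natDegree_basis hvs hi, Polynomial.coeff_natDegree, Lagrange.basis,
    Polynomial.leadingCoeff_prod]
  refine Finset.prod_congr rfl fun j hj => ?_
  rw [Lagrange.basisDivisor, Polynomial.leadingCoeff_mul, Polynomial.leadingCoeff_C,
    (Polynomial.monic_X_sub_C _).leadingCoeff, mul_one]

lemma aux_sum {F : Type*} [Field F] {ι : Type*} [Fintype ι] [DecidableEq ι]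
    (v : ι → F) (hv : Function.Injective v) (h : Polynomial F)
    (hd : h.degree < ((Fintype.card ι - 1 : ℕ) : WithBot ℕ)) :
    ∑ i, (∏ j ∈ Finset.univ.erase i, (v i - v j))⁻¹ * h.eval (v i) = 0 := by
  have hvs : Set.InjOn v (Finset.univ : Finset ι) := hv.injOn
  have hlt : h.degree < ((Fintype.card ι : ℕ) : WithBot ℕ) :=
    hd.trans_le (by exact_mod_cast Nat.sub_le _ 1)
  have heq : h = Lagrange.interpolate Finset.univ v fun i => h.eval (v i) :=
    Lagrange.eq_interpolate hvs (by rwa [Finset.card_univ])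
  have h0 : h.coeff (Fintype.card ι - 1) = 0 := Polynomial.coeff_eq_zero_of_degree_lt hd
  calc ∑ i, (∏ j ∈ Finset.univ.erase i, (v i - v j))⁻¹ * h.eval (v i)
      = h.coeff (Fintype.card ι - 1) := by
        conv_rhs => rw [heq]
        rw [Lagrange.interpolate_apply, Polynomial.finset_sum_coeff]
        refine Finset.sum_congr rfl fun i _ => ?_
        have := coeff_lagrange_basis hvs (Finset.mem_univ i)
        rw [Finset.card_univ] at this
        rw [Polynomial.coeff_C_mul, this, ← Finset.prod_inv_distrib, mul_comm]
    _ = 0 := h0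

theorem stmt4 (q n k : ℕ) (hq : IsPrimePow q)
    (F : Type*) [Field F] [Fintype F] (hF : Fintype.card F = q ^ 2)
    (α : Fin n → F) (hα : Function.Injective α)
    (v : Fin n → F) (hv : ∀ i, v i ≠ 0)
    (hvu : ∀ i, (v i) ^ (q + 1) = (∏ j ∈ Finset.univ.erase i, (α i - α j))⁻¹)
    (hk : k * (q + 1) ≤ n + q - 1) :
    ∀ f g : Polynomial F, f.degree < k → g.degree < k →
      ∑ i, (v i * f.eval (α i)) * (v i * g.eval (α i)) ^ q = 0 := by
  intro f g hf hg
  by_cases hf0 : f = 0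
  · simp [hf0]
  by_cases hg0 : g = 0
  · simp [hg0, zero_pow hq.pos.ne']
  have hdf : f.natDegree < k := (Polynomial.natDegree_lt_iff_degree_lt hf0).mpr hf
  have hdg : g.natDegree < k := (Polynomial.natDegree_lt_iff_degree_lt hg0).mpr hg
  have hk1 : 1 ≤ k := by omega
  have hq2 : 2 ≤ q := hq.two_le
  have hmul : (k - 1) * (q + 1) + (q + 1) = k * (q + 1) := by
    have h1 : k - 1 + 1 = k := by omega
    calc (k - 1) * (q + 1) + (q + 1) = (k - 1 + 1) * (q + 1) := by ring
      _ = k * (q + 1) := by rw [h1]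
  have hn2 : 2 ≤ n := by
    have : q + 1 ≤ k * (q + 1) := Nat.le_mul_of_pos_left _ hk1
    omega
  have hnd : (f * g ^ q).natDegree < n - 1 := by
    have hmul2 : (f * g ^ q).natDegree = f.natDegree + q * g.natDegree := by
      rw [Polynomial.natDegree_mul hf0 (pow_ne_zero _ hg0), Polynomial.natDegree_pow]
    have hb : (f * g ^ q).natDegree ≤ (k - 1) * (q + 1) := by
      rw [hmul2]
      calc f.natDegree + q * g.natDegree ≤ (k - 1) + q * (k - 1) :=
            Nat.add_le_add (by omega) (Nat.mul_le_mul_left _ (by omega))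
        _ = (k - 1) * (q + 1) := by ring
    omega
  have hdeg : (f * g ^ q).degree < ((Fintype.card (Fin n) - 1 : ℕ) : WithBot ℕ) := by
    rw [Fintype.card_fin]
    exact lt_of_le_of_lt (Polynomial.degree_le_natDegree) (by exact_mod_cast hnd)
  calc ∑ i, (v i * f.eval (α i)) * (v i * g.eval (α i)) ^ q
      = ∑ i, (v i) ^ (q + 1) * (f.eval (α i) * (g.eval (α i)) ^ q) := by
        refine Finset.sum_congr rfl fun i _ => ?_
        ring
    _ = ∑ i, (∏ j ∈ Finset.univ.erase i, (α i - α j))⁻¹ * (f * g ^ q).eval (α i) := by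
        refine Finset.sum_congr rfl fun i _ => ?_
        rw [hvu i, Polynomial.eval_mul, Polynomial.eval_pow]
    _ = 0 := aux_sum α hα _ hdeg
end

section
/- Let q be a prime power and let α_1,…,α_n be distinct elements of F_q with u_i = ∏_{j≠i}(α_i - α_j)^{-1}. If v_1,…,v_n ∈ F_q^* satisfy v_i^2 = u_i for all i and 2k ≤ n, then the generalized Reed-Solomon code GRS_k(α, v) is Euclidean self-orthogonal. -/
open Polynomial Finset

theorem stmt5 (q n k : ℕ) (hq : IsPrimePow q)
    (F : Type*) [Field F] [Fintype F] (hF : Fintype.card F = q)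
    (α : Fin n → F) (hα : Function.Injective α)
    (v : Fin n → F) (hv : ∀ i, v i ≠ 0)
    (hvu : ∀ i, (v i) ^ 2 = (∏ j ∈ Finset.univ.erase i, (α i - α j))⁻¹)
    (hk : 2 * k ≤ n) :
    ∀ f g : Polynomial F, f.degree < k → g.degree < k →
      ∑ i, (v i * f.eval (α i)) * (v i * g.eval (α i)) = 0 := by
  intro f g hf hg
  -- trivial cases
  rcases eq_or_ne f 0 with rfl | hf0
  · simp
  rcases eq_or_ne g 0 with rfl | hg0
  · simp
  have hkpos : 1 ≤ k := by
    by_contra h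
    push_neg at h
    interval_cases k
    · rw [Nat.cast_zero, Nat.WithBot.lt_zero_iff, degree_eq_bot] at hf
      exact hf0 hf
  have hn2 : 2 ≤ n := le_trans (by omega) hk
  set h : F[X] := f * g with hh
  have hhne : h ≠ 0 := mul_ne_zero hf0 hg0
  have hdf : f.natDegree < k := (natDegree_lt_iff_degree_lt hf0).2 hf
  have hdg : g.natDegree < k := (natDegree_lt_iff_degree_lt hg0).2 hg
  have hdeg : h.natDegree < n - 1 := by
    rw [hh, natDegree_mul hf0 hg0]; omega
  have hdeglt : h.degree < ((n - 1 : ℕ) : WithBot ℕ) :=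
    (natDegree_lt_iff_degree_lt hhne).1 hdeg
  have hcoeff : h.coeff (n - 1) = 0 := coeff_eq_zero_of_degree_lt hdeglt
  have hinj : Set.InjOn α (Finset.univ : Finset (Fin n)) := hα.injOn
  have hcard : (Finset.univ : Finset (Fin n)).card = n := Finset.card_univ.trans (Fintype.card_fin n)
  have hdegn : h.degree < ((Finset.univ : Finset (Fin n)).card : WithBot ℕ) := by
    rw [hcard]
    exact (natDegree_lt_iff_degree_lt hhne).1 (by omega)
  have hinterp : h = Lagrange.interpolate Finset.univ α (fun i => h.eval (α i)) :=
    Lagrange.eq_interpolate hinj hdegn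
  -- leading coefficient of basis polynomials
  have hbasis : ∀ i : Fin n, (Lagrange.basis Finset.univ α i).coeff (n - 1) = (v i) ^ 2 := by
    intro i
    have hne : ∀ j ∈ Finset.univ.erase i, α i - α j ≠ 0 := by
      intro j hj
      rw [sub_ne_zero]
      exact fun e => (Finset.mem_erase.1 hj).1 (hα e).symm
    have hnd : (Lagrange.basis Finset.univ α i).natDegree = n - 1 := by
      rw [Lagrange.natDegree_basis hinj (Finset.mem_univ i), hcard]
    rw [← hnd, Polynomial.coeff_natDegree]
    rw [Lagrange.basis, leadingCoeff_prod]
    rw [hvu i, ← Finset.prod_inv_distrib]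
    refine Finset.prod_congr rfl fun j hj => ?_
    rw [Lagrange.basisDivisor, leadingCoeff_mul, leadingCoeff_C, leadingCoeff_X_sub_C, mul_one]
  have key : ∑ i, h.eval (α i) * (v i) ^ 2 = 0 := by
    calc ∑ i, h.eval (α i) * (v i) ^ 2
        = ∑ i, h.eval (α i) * (Lagrange.basis Finset.univ α i).coeff (n - 1) := by
          refine Finset.sum_congr rfl fun i _ => ?_; rw [hbasis]
      _ = (Lagrange.interpolate Finset.univ α (fun i => h.eval (α i))).coeff (n - 1) := by
          rw [Lagrange.interpolate_apply, Polynomial.finset_sum_coeff]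
          refine Finset.sum_congr rfl fun i _ => ?_
          rw [Polynomial.coeff_C_mul]
      _ = h.coeff (n - 1) := by rw [← hinterp]
      _ = 0 := hcoeff
  calc ∑ i, (v i * f.eval (α i)) * (v i * g.eval (α i))
      = ∑ i, h.eval (α i) * (v i) ^ 2 := by
        refine Finset.sum_congr rfl fun i _ => ?_
        rw [hh, Polynomial.eval_mul]; ring
    _ = 0 := key
end

section
/- Let C be an [n,k] linear code over F_{q^2} with generator matrix G. Then rank(G G†) = k − dim(Hull_H(C)), where G† is the conjugate transpose (entrywise q-th power followed by transpose) and Hull_H(C) = C ∩ C^{⊥_H}. -/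
/-! For `q² = |F|`, `σ x = x ^ q` is an involutive automorphism of `F`, so `σ ⟨c, y⟩ = ⟨y, c⟩` for
the Hermitian form `⟨c, y⟩ = ∑ cᵢ σ yᵢ` and Hermitian orthogonality is symmetric. The `j`-th entry
of `x G G†` is `⟨x G, Gⱼ⟩`, so `x G G† = 0` iff `x G ∈ C^⊥H`. As `x ↦ x G` is injective with image
`C`, the left kernel of `G G†` is isomorphic to `C ⊓ C^⊥H`, and rank–nullity gives the formula. -/

open Matrix Function Module

theorem FiniteField.exists_ringHom_coe_eq_pow {F : Type*} [Field F] [Fintype F] {q : ℕ}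
    (hq : q ∣ Fintype.card F) : ∃ σ : F →+* F, ⇑σ = (· ^ q) := by
  obtain ⟨n, hp, hcard⟩ := FiniteField.card F (ringChar F)
  obtain ⟨m, -, rfl⟩ := (Nat.dvd_prime_pow hp).mp (hcard ▸ hq)
  have : Fact (ringChar F).Prime := ⟨hp⟩
  exact ⟨iterateFrobenius F (ringChar F) m, rfl⟩

theorem Submodule.finrank_comap_of_injective {R M N : Type*} [Ring R] [AddCommGroup M]
    [Module R M] [AddCommGroup N] [Module R N] {f : M →ₗ[R] N} (hf : Injective f)
    (D : Submodule R N) : finrank R (D.comap f) = finrank R ↥(LinearMap.range f ⊓ D) := by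
  rw [← Submodule.map_comap_eq]
  exact (Submodule.equivMapOfInjective f hf _).finrank_eq

theorem Matrix.rank_add_finrank_ker_vecMulLinear {K m n : Type*} [Field K] [Fintype m]
    [Fintype n] (A : Matrix m n K) :
    A.rank + finrank K (LinearMap.ker A.vecMulLinear) = Fintype.card m := by
  rw [rank_eq_finrank_span_row, ← range_vecMulLinear, LinearMap.finrank_range_add_finrank_ker,
    finrank_fintype_fun_eq_card]

namespace Matrix

variable {R ι m : Type*} [CommSemiring R] [Fintype ι]

theorem forall_mem_span_range_dotProduct_eq_zero_iff (G : Matrix m ι R) (w : ι → R) :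
    (∀ c ∈ Submodule.span R (Set.range G), c ⬝ᵥ w = 0) ↔ ∀ j, G j ⬝ᵥ w = 0 := by
  refine ⟨fun h j => h _ (Submodule.subset_span ⟨j, rfl⟩), fun h c hc => ?_⟩
  have hle : Submodule.span R (Set.range G) ≤ LinearMap.ker ((dotProductBilin R R).flip w) :=
    Submodule.span_le.mpr <| Set.range_subset_iff.mpr fun j => by simpa using h j
  simpa using hle hc

variable {σ : R →+* R}

theorem map_dotProduct_comp_of_involutive (hσ : Involutive σ) (c y : ι → R) :
    σ (c ⬝ᵥ (σ ∘ y)) = y ⬝ᵥ (σ ∘ c) := by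
  simp only [dotProduct, map_sum, map_mul, Function.comp_apply, hσ (y _)]
  exact Finset.sum_congr rfl fun i _ => mul_comm _ _

theorem dotProduct_comp_eq_zero_comm (hσ : Involutive σ) (c y : ι → R) :
    c ⬝ᵥ (σ ∘ y) = 0 ↔ y ⬝ᵥ (σ ∘ c) = 0 := by
  rw [← map_dotProduct_comp_of_involutive hσ, map_eq_zero_iff _ hσ.injective]

theorem vecMul_map_transpose_apply (G : Matrix m ι R) (v : ι → R) (j : m) :
    (v ᵥ* Gᵀ.map σ) j = v ⬝ᵥ (σ ∘ G j) := rfl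

theorem ker_vecMulLinear_mul_map_transpose [Fintype m] (hσ : Involutive σ) (G : Matrix m ι R)
    {D : Submodule R (ι → R)}
    (hD : ∀ y, y ∈ D ↔ ∀ c ∈ Submodule.span R (Set.range G), c ⬝ᵥ (σ ∘ y) = 0) :
    LinearMap.ker (G * Gᵀ.map σ).vecMulLinear = D.comap G.vecMulLinear := by
  ext x
  rw [LinearMap.mem_ker, Submodule.mem_comap, vecMulLinear_apply, vecMulLinear_apply, hD,
    forall_mem_span_range_dotProduct_eq_zero_iff, ← vecMul_vecMul, funext_iff]
  simp only [vecMul_map_transpose_apply, Pi.zero_apply, dotProduct_comp_eq_zero_comm hσ]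

end Matrix

theorem stmt6_general (q n k : ℕ)
    (F : Type*) [Field F] [Fintype F] (hF : Fintype.card F = q ^ 2)
    (C : Submodule F (Fin n → F))
    (G : Matrix (Fin k) (Fin n) F)
    (hGspan : Submodule.span F (Set.range G) = C)
    (hGli : LinearIndependent F G)
    (Cd : Submodule F (Fin n → F))
    (hdual : ∀ y : Fin n → F, y ∈ Cd ↔ ∀ c ∈ C, ∑ i, c i * (y i) ^ q = 0) :
    (G * (G.transpose.map (fun x => x ^ q))).rank
      = k - Module.finrank F ↥(C ⊓ Cd) := by
  obtain ⟨σ, hσq⟩ := FiniteField.exists_ringHom_coe_eq_pow (hF ▸ dvd_pow_self q two_ne_zero)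
  have hσ : Involutive σ := fun x => by
    simp only [hσq, ← pow_mul, ← sq, ← hF, FiniteField.pow_card]
  have hker := ker_vecMulLinear_mul_map_transpose hσ G (D := Cd) <| by
    simpa only [hσq, hGspan, dotProduct, Function.comp_apply] using hdual
  have hrank := rank_add_finrank_ker_vecMulLinear (G * Gᵀ.map σ)
  rw [hker, Submodule.finrank_comap_of_injective (vecMul_injective_iff.mpr hGli),
    (range_vecMulLinear G).trans hGspan, Fintype.card_fin, hσq] at hrank
  omega

theorem stmt6 (q n k : ℕ) (hq : IsPrimePow q)
    (F : Type*) [Field F] [Fintype F] (hF : Fintype.card F = q ^ 2)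
    (C : Submodule F (Fin n → F)) (hC : Module.finrank F C = k)
    (G : Matrix (Fin k) (Fin n) F)
    (hGspan : Submodule.span F (Set.range G) = C)
    (hGli : LinearIndependent F G)
    (Cd : Submodule F (Fin n → F))
    (hdual : ∀ y : Fin n → F, y ∈ Cd ↔ ∀ c ∈ C, ∑ i, c i * (y i) ^ q = 0) :
    (G * (G.transpose.map (fun x => x ^ q))).rank
      = k - Module.finrank F ↥(C ⊓ Cd) :=
  stmt6_general q n k F hF C G hGspan hGli Cd hdual
end
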